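/- Let F be a field of characteristic ≠ 2 and U = [u_{ij}] a 3×3 strictly lower triangular matrix over F such that u_{32} = 0 or 2u_{31} + u_{32}u_{21} = 0. Then A(U) ≅ A(0₃), i.e., A(U) is isomorphic to the commutative F-algebra generated by three elements that each square to zero. -/

import Mathlib

open scoped BigOperators

noncomputable section

variable {F : Type} [Field F]

/-- `T` is strictly lower triangular. -/
def SLT {n : ℕ} (T : Matrix (Fin n) (Fin n) F) : Prop :=
  ∀ i j : Fin n, i ≤ j → T i j = 0

/-- The ideal of relations defining the nil graded algebra `A(T)`:
`X i ^ 2 = ∑ j < i, T i j * X j * X i` (for `i = 0` the sum is empty, giving `X 0 ^ 2 = 0`). -/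
def ntIdeal {n : ℕ} (T : Matrix (Fin n) (Fin n) F) : Ideal (MvPolynomial (Fin n) F) :=
  Ideal.span {p | ∃ i : Fin n,
    p = MvPolynomial.X i ^ 2 -
      ∑ j ∈ Finset.univ.filter (fun j => j < i),
        MvPolynomial.C (T i j) * MvPolynomial.X j * MvPolynomial.X i}

/-- The nil graded algebra `A(T)` associated to the strictly lower triangular matrix `T`. -/
abbrev NTAlg {n : ℕ} (T : Matrix (Fin n) (Fin n) F) : Type :=
  MvPolynomial (Fin n) F ⧸ ntIdeal T

/-- The generator `X i` of `A(T)`. -/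
def ntGen {n : ℕ} (T : Matrix (Fin n) (Fin n) F) (i : Fin n) : NTAlg T :=
  Ideal.Quotient.mk (ntIdeal T) (MvPolynomial.X i)

/-- There is a degree-preserving isomorphism `A(T) → A(S)`, i.e. an algebra isomorphism
sending each generator to an `F`-linear combination of the generators of the target. -/
def NTIso {n : ℕ} (T S : Matrix (Fin n) (Fin n) F) : Prop :=
  ∃ e : NTAlg T ≃ₐ[F] NTAlg S, ∃ Γ : Matrix (Fin n) (Fin n) F,
    ∀ j : Fin n, e (ntGen T j) = ∑ i : Fin n, Γ i j • ntGen S i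

/-! Write `U 1 0 = 2c`, `U 2 0 = 2a`, `U 2 1 = 2b` (possible as `2 ≠ 0`). In `A(U)` the
elements `x₀`, `x₁ - c x₀`, `x₂ - a x₀ - b x₁` square to zero: the only obstruction is the cross
term `2b(a + bc) x₀x₁`, and the hypothesis says exactly that `b(a + bc) = 0`. Conversely the
generators `z` of `A(0₃)` give elements `z₀`, `z₁ + c z₀`, `z₂ + (a + bc) z₀ + b z₁` satisfying
the relations of `A(U)`. The two unitriangular changes of generators are mutually inverse, so
the induced algebra maps are inverse isomorphisms. -/

open Finset MvPolynomial

theorem Matrix.sum_smul_sum_smul {R M : Type*} [CommSemiring R] [AddCommMonoid M] [Module R M]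
    {n : ℕ} (Γ Δ : Matrix (Fin n) (Fin n) R) (w : Fin n → M) (k : Fin n) :
    ∑ i, Δ i k • ∑ l, Γ l i • w l = ∑ l, (Γ * Δ) l k • w l := by
  simp only [smul_sum, smul_smul, Matrix.mul_apply, sum_smul]
  rw [sum_comm]
  simp only [mul_comm]

theorem Matrix.sum_one_apply_smul {R M : Type*} [Semiring R] [AddCommMonoid M] [Module R M]
    {n : ℕ} (w : Fin n → M) (k : Fin n) :
    ∑ l, (1 : Matrix (Fin n) (Fin n) R) l k • w l = w k := by
  simp [Matrix.one_apply, ite_smul]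

section

variable {n : ℕ} {A : Type*} [CommRing A] [Algebra F A]

def IsNTRel (T : Matrix (Fin n) (Fin n) F) (v : Fin n → A) : Prop :=
  ∀ i, v i ^ 2 = ∑ j ∈ univ.filter (· < i), T i j • v j * v i

theorem isNTRel_ntGen (T : Matrix (Fin n) (Fin n) F) : IsNTRel T (ntGen T) := by
  intro i
  have hmem : X i ^ 2 - ∑ j ∈ univ.filter (· < i), C (T i j) * X j * X i ∈ ntIdeal T :=
    Ideal.subset_span ⟨i, rfl⟩
  have h := Ideal.Quotient.eq_zero_iff_mem.mpr hmem
  rw [map_sub, sub_eq_zero, map_pow, map_sum] at h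
  simpa only [map_mul, ← MvPolynomial.algebraMap_eq, Ideal.Quotient.mk_algebraMap,
    Algebra.smul_def, ntGen] using h

def ntLift (T : Matrix (Fin n) (Fin n) F) (v : Fin n → A) (hv : IsNTRel T v) :
    NTAlg T →ₐ[F] A :=
  Ideal.Quotient.liftₐ (ntIdeal T) (aeval v) fun _ hp => RingHom.mem_ker.mp <| by
    refine (Ideal.span_le (I := RingHom.ker (aeval v : MvPolynomial (Fin n) F →ₐ[F] A))).mpr
      ?_ hp
    rintro _ ⟨i, rfl⟩
    simp [hv i, Algebra.smul_def]

@[simp]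
theorem ntLift_ntGen (T : Matrix (Fin n) (Fin n) F) (v : Fin n → A) (hv : IsNTRel T v)
    (i : Fin n) : ntLift T v hv (ntGen T i) = v i := by
  rw [ntLift, ntGen, Ideal.Quotient.liftₐ_apply]
  exact aeval_X v i

theorem ntAlgHom_ext {T : Matrix (Fin n) (Fin n) F} {f g : NTAlg T →ₐ[F] A}
    (h : ∀ i, f (ntGen T i) = g (ntGen T i)) : f = g :=
  Ideal.Quotient.algHom_ext F (MvPolynomial.algHom_ext h)

theorem isNTRel_zero_iff {v : Fin n → A} :
    IsNTRel (0 : Matrix (Fin n) (Fin n) F) v ↔ ∀ i, v i ^ 2 = 0 := by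
  simp [IsNTRel]

theorem isNTRel_fin_three_iff {T : Matrix (Fin 3) (Fin 3) F} {v : Fin 3 → A} :
    IsNTRel T v ↔ v 0 ^ 2 = 0 ∧ v 1 ^ 2 = T 1 0 • v 0 * v 1 ∧
      v 2 ^ 2 = T 2 0 • v 0 * v 2 + T 2 1 • v 1 * v 2 := by
  simp [IsNTRel, Fin.forall_fin_succ, sum_filter, Fin.sum_univ_three]

theorem ntIso_of_mul_eq_one {T S Γ Δ : Matrix (Fin n) (Fin n) F} (hΓΔ : Γ * Δ = 1)
    (hT : IsNTRel T fun j => ∑ i, Γ i j • ntGen S i)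
    (hS : IsNTRel S fun j => ∑ i, Δ i j • ntGen T i) : NTIso T S := by
  let f := ntLift T _ hT
  let g := ntLift S _ hS
  have hfg : f.comp g = AlgHom.id F _ := ntAlgHom_ext fun k => by
    simp [f, g, map_sum, map_smul, Matrix.sum_smul_sum_smul, hΓΔ, Matrix.sum_one_apply_smul]
  have hgf : g.comp f = AlgHom.id F _ := ntAlgHom_ext fun k => by
    simp [f, g, map_sum, map_smul, Matrix.sum_smul_sum_smul, mul_eq_one_comm.mp hΓΔ,
      Matrix.sum_one_apply_smul]
  exact ⟨AlgEquiv.ofAlgHom f g hfg hgf, Γ, ntLift_ntGen T _ hT⟩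

variable {U : Matrix (Fin 3) (Fin 3) F} {c a b : F}

theorem isNTRel_sum_smul_of_sq_eq_zero (hc : U 1 0 = 2 * c) (ha : U 2 0 = 2 * a)
    (hb : U 2 1 = 2 * b) (hk : b * (a + b * c) = 0) {z : Fin 3 → A} (hz : ∀ i, z i ^ 2 = 0) :
    IsNTRel U fun j => ∑ i, !![1, c, a + b * c; 0, 1, b; 0, 0, 1] i j • z i := by
  have hk' : algebraMap F A b * (algebraMap F A a + algebraMap F A b * algebraMap F A c) = 0 := by
    simpa using congrArg (algebraMap F A) hk
  rw [isNTRel_fin_three_iff]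
  simp [Fin.sum_univ_three, hc, ha, hb, Algebra.smul_def, map_ofNat]
  refine ⟨hz 0, ?_, ?_⟩
  · linear_combination hz 1 - algebraMap F A c ^ 2 * hz 0
  · linear_combination hz 2 - (algebraMap F A a + algebraMap F A b * algebraMap F A c) ^ 2 * hz 0
      - algebraMap F A b ^ 2 * hz 1 - 2 * z 0 * z 1 * hk'

theorem sq_sum_smul_eq_zero_of_isNTRel (hc : U 1 0 = 2 * c) (ha : U 2 0 = 2 * a)
    (hb : U 2 1 = 2 * b) (hk : b * (a + b * c) = 0) {x : Fin 3 → A} (hx : IsNTRel U x)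
    (j : Fin 3) :
    (∑ i, !![1, -c, -a; 0, 1, -b; 0, 0, 1] i j • x i) ^ 2 = 0 := by
  have hk' : algebraMap F A b * (algebraMap F A a + algebraMap F A b * algebraMap F A c) = 0 := by
    simpa using congrArg (algebraMap F A) hk
  obtain ⟨hx0, hx1, hx2⟩ := isNTRel_fin_three_iff.mp hx
  simp only [hc, ha, hb, Algebra.smul_def, map_mul, map_ofNat] at hx1 hx2
  fin_cases j <;> simp [Fin.sum_univ_three, Algebra.smul_def]
  · exact hx0
  · linear_combination hx1 + algebraMap F A c ^ 2 * hx0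
  · linear_combination hx2 + algebraMap F A a ^ 2 * hx0 + algebraMap F A b ^ 2 * hx1
      + 2 * x 0 * x 1 * hk'

end

theorem unitriangular_mul_inverse (c a b : F) :
    !![1, c, a + b * c; 0, 1, b; 0, 0, 1] * !![1, -c, -a; 0, 1, -b; 0, 0, 1] =
      (1 : Matrix (Fin 3) (Fin 3) F) := by
  ext i j
  fin_cases i <;> fin_cases j <;> simp [Matrix.mul_apply, Fin.sum_univ_three]
  ring

theorem stmt10_general (h2 : (2 : F) ≠ 0) (U : Matrix (Fin 3) (Fin 3) F)
    (h : U 2 1 = 0 ∨ 2 * U 2 0 + U 2 1 * U 1 0 = 0) :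
    NTIso U (0 : Matrix (Fin 3) (Fin 3) F) := by
  obtain ⟨c, hc⟩ : ∃ c : F, U 1 0 = 2 * c := ⟨U 1 0 / 2, by field_simp⟩
  obtain ⟨a, ha⟩ : ∃ a : F, U 2 0 = 2 * a := ⟨U 2 0 / 2, by field_simp⟩
  obtain ⟨b, hb⟩ : ∃ b : F, U 2 1 = 2 * b := ⟨U 2 1 / 2, by field_simp⟩
  have hk : b * (a + b * c) = 0 := by
    rw [hc, ha, hb] at h
    rcases h with h | h
    · exact mul_eq_zero_of_left ((mul_eq_zero.mp h).resolve_left h2) _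
    · refine mul_eq_zero_of_right _ ?_
      have h4 : 2 * 2 * (a + b * c) = 0 := by linear_combination h
      simpa [h2] using h4
  exact ntIso_of_mul_eq_one (unitriangular_mul_inverse c a b)
    (isNTRel_sum_smul_of_sq_eq_zero hc ha hb hk (isNTRel_zero_iff.mp (isNTRel_ntGen 0)))
    (isNTRel_zero_iff.mpr (sq_sum_smul_eq_zero_of_isNTRel hc ha hb hk (isNTRel_ntGen U)))

/-- If `u₃₂ = 0` or `2u₃₁ + u₃₂u₂₁ = 0`, then `A(U) ≅ A(0₃)`. -/
theorem stmt10 (h2 : (2 : F) ≠ 0) (U : Matrix (Fin 3) (Fin 3) F) (hU : SLT U)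
    (h : U 2 1 = 0 ∨ 2 * U 2 0 + U 2 1 * U 1 0 = 0) :
    NTIso U (0 : Matrix (Fin 3) (Fin 3) F) :=
  stmt10_general h2 U h
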